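/- arXiv:2510.19651 — 4 statements merged into one kernel-verified Lean document; each statement's English description precedes it below -/
import Mathlib

section
/- Let z_1,...,z_r be distinct complex numbers and c_1,...,c_r nonzero complex numbers, with signal q(t) = Σ_{j=1}^r c_j z_j^t. Define Hankel matrices H_0 = (q(j+k))_{j,k=0}^{r-1} and H_1 = (q(j+k+1))_{j,k=0}^{r-1}. Then the set of generalized eigenvalues λ satisfying H_1 v = λ H_0 v for some nonzero vector v is exactly {z_1, ..., z_r}. -/
open Matrix

theorem generalized_eigenvalues_of_hankel_pencil (r : ℕ) (z c : Fin r → ℂ)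
    (hz : Function.Injective z) (hc : ∀ j, c j ≠ 0)
    (q : ℕ → ℂ) (hq : ∀ t, q t = ∑ j, c j * z j ^ t)
    (H₀ H₁ : Matrix (Fin r) (Fin r) ℂ)
    (hH₀ : ∀ j k, H₀ j k = q (j.1 + k.1))
    (hH₁ : ∀ j k, H₁ j k = q (j.1 + k.1 + 1)) :
    {l : ℂ | ∃ v : Fin r → ℂ, v ≠ 0 ∧ H₁.mulVec v = l • H₀.mulVec v} = Set.range z := by
  classical
  set V : Matrix (Fin r) (Fin r) ℂ := (Matrix.vandermonde z)ᵀ with hVdef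
  have hdet : IsUnit V.det := by
    rw [hVdef, Matrix.det_transpose, Matrix.det_vandermonde, isUnit_iff_ne_zero]
    refine Finset.prod_ne_zero_iff.mpr fun i _ => Finset.prod_ne_zero_iff.mpr fun j hj => ?_
    rw [Finset.mem_Ioi] at hj
    exact sub_ne_zero.mpr fun h => absurd (hz h) (ne_of_gt hj)
  have hdetT : IsUnit Vᵀ.det := by rwa [Matrix.det_transpose]
  have hVinj : ∀ a b : Fin r → ℂ, V.mulVec a = V.mulVec b → a = b := by
    intro a b h
    have := congrArg (fun u => V⁻¹.mulVec u) h
    simpa [Matrix.mulVec_mulVec, Matrix.nonsing_inv_mul V hdet, Matrix.one_mulVec] using this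
  have hVTinj : ∀ a b : Fin r → ℂ, Vᵀ.mulVec a = Vᵀ.mulVec b → a = b := by
    intro a b h
    have := congrArg (fun u => (Vᵀ)⁻¹.mulVec u) h
    simpa [Matrix.mulVec_mulVec, Matrix.nonsing_inv_mul Vᵀ hdetT, Matrix.one_mulVec] using this
  have hVTsurj : ∀ w : Fin r → ℂ, ∃ v, Vᵀ.mulVec v = w := by
    intro w
    refine ⟨(Vᵀ)⁻¹.mulVec w, ?_⟩
    rw [Matrix.mulVec_mulVec, Matrix.mul_nonsing_inv Vᵀ hdetT, Matrix.one_mulVec]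
  have hfac : ∀ d : Fin r → ℂ, ∀ j k : Fin r,
      (V * Matrix.diagonal d * Vᵀ) j k = ∑ x, d x * (z x ^ j.1 * z x ^ k.1) := by
    intro d j k
    simp only [Matrix.mul_apply, Matrix.transpose_apply, hVdef, Matrix.vandermonde_apply]
    refine Finset.sum_congr rfl fun x _ => ?_
    rw [Finset.sum_eq_single x (fun b _ hb => by rw [Matrix.diagonal_apply_ne d hb, mul_zero])
      (by simp)]
    simp only [Matrix.diagonal_apply_eq]
    ring
  have h0 : H₀ = V * Matrix.diagonal c * Vᵀ := by
    ext j k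
    rw [hH₀, hq, hfac]
    exact Finset.sum_congr rfl fun x _ => by rw [pow_add]
  have h1 : H₁ = V * Matrix.diagonal (fun j => c j * z j) * Vᵀ := by
    ext j k
    rw [hH₁, hq, hfac]
    exact Finset.sum_congr rfl fun x _ => by rw [pow_add, pow_add, pow_one]; ring
  have key : ∀ (D : Matrix (Fin r) (Fin r) ℂ) (u : Fin r → ℂ),
      (V * D * Vᵀ).mulVec u = V.mulVec (D.mulVec (Vᵀ.mulVec u)) := by
    intro D u
    rw [Matrix.mulVec_mulVec, Matrix.mulVec_mulVec, Matrix.mul_assoc]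
  ext l
  simp only [Set.mem_setOf_eq, Set.mem_range]
  constructor
  · rintro ⟨v, hv, heq⟩
    set w : Fin r → ℂ := Vᵀ.mulVec v with hw
    have hw0 : w ≠ 0 := by
      intro h
      exact hv (hVTinj v 0 (by rw [Matrix.mulVec_zero]; exact h))
    rw [h0, h1, key, key] at heq
    have heq' : (Matrix.diagonal (fun j => c j * z j)).mulVec w
        = l • (Matrix.diagonal c).mulVec w := by
      apply hVinj
      rw [heq, Matrix.mulVec_smul]
    obtain ⟨i, hi⟩ := Function.ne_iff.mp hw0
    refine ⟨i, ?_⟩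
    have hcomp := congrFun heq' i
    simp only [Matrix.mulVec_diagonal, Pi.smul_apply, smul_eq_mul] at hcomp
    have hcw : c i * w i ≠ 0 := mul_ne_zero (hc i) hi
    have h2 : z i * (c i * w i) = l * (c i * w i) := by linear_combination hcomp
    exact mul_right_cancel₀ hcw h2
  · rintro ⟨j, hj⟩
    obtain ⟨v, hv⟩ := hVTsurj (Pi.single j 1)
    refine ⟨v, ?_, ?_⟩
    · intro h
      rw [h, Matrix.mulVec_zero] at hv
      have := congrFun hv j
      simp at this
    · have hdv : (Matrix.diagonal (fun j => c j * z j)).mulVec (Pi.single j 1)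
          = l • (Matrix.diagonal c).mulVec (Pi.single j 1) := by
        ext i
        rcases eq_or_ne i j with rfl | hij
        · simp only [Matrix.mulVec_diagonal, Pi.single_eq_same, Pi.smul_apply, smul_eq_mul]
          rw [← hj]; ring
        · simp only [Matrix.mulVec_diagonal, Pi.single_eq_of_ne hij, Pi.smul_apply,
            smul_eq_mul, mul_zero]
      rw [h0, h1, key, key, hv, hdv, Matrix.mulVec_smul]
end

section
/- Let z_1,...,z_r be distinct complex numbers. The inverse of the Vandermonde matrix V = (z_j^{k-1})_{j,k=1}^r has entries W_{jk} = (-1)^{r-j} e_{r-j}(z_1,...,z_{k-1},z_{k+1},...,z_r) / Π_{l≠k}(z_k - z_l), where e_m denotes the elementary symmetric polynomial of degree m in r-1 variables. -/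
open Matrix Finset

/-- The elementary symmetric polynomial of degree `m` of the values of `z`
over the index set `s`. -/
noncomputable def esym {r : ℕ} (s : Finset (Fin r)) (m : ℕ) (z : Fin r → ℂ) : ℂ :=
  ∑ t ∈ s.powersetCard m, ∏ i ∈ t, z i

open Polynomial in
lemma coeff_prod_X_sub_C {r : ℕ} (s : Finset (Fin r)) (z : Fin r → ℂ) (i : ℕ)
    (h : i ≤ s.card) :
    (∏ l ∈ s, (X - C (z l))).coeff i = (-1) ^ (s.card - i) * esym s (s.card - i) z := by
  have : (∏ l ∈ s, (X - C (z l))) = ∏ l ∈ s, (X + C (-(z l))) := by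
    simp [sub_eq_add_neg]
  rw [this, Finset.prod_X_add_C_coeff s (fun l => -(z l)) h, esym, Finset.mul_sum]
  refine Finset.sum_congr rfl fun t ht => ?_
  have hc : t.card = s.card - i := (Finset.mem_powersetCard.mp ht).2
  calc ∏ i ∈ t, -z i = ∏ i ∈ t, (-1 : ℂ) * z i := by simp
    _ = (-1) ^ (#s - i) * ∏ i ∈ t, z i := by
        rw [Finset.prod_mul_distrib, Finset.prod_const, hc]

open Polynomial in
theorem vandermonde_inverse_entries (r : ℕ) (z : Fin r → ℂ)
    (hz : Function.Injective z)
    (V W : Matrix (Fin r) (Fin r) ℂ)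
    (hV : ∀ j k, V j k = z j ^ (k.1))
    (hW : ∀ j k : Fin r, W j k =
      (-1) ^ (r - 1 - j.1) * esym (Finset.univ.erase k) (r - 1 - j.1) z /
        ∏ l ∈ Finset.univ.erase k, (z k - z l)) :
    V⁻¹ = W := by
  apply Matrix.inv_eq_right_inv
  ext j k
  have hcard : (Finset.univ.erase k).card = r - 1 := by
    rw [Finset.card_erase_of_mem (Finset.mem_univ k), Finset.card_univ, Fintype.card_fin]
  set P : Polynomial ℂ := ∏ l ∈ Finset.univ.erase k, (X - C (z l)) with hP
  have hD : (∏ l ∈ Finset.univ.erase k, (z k - z l)) ≠ 0 := by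
    apply Finset.prod_ne_zero_iff.mpr
    intro l hl
    have : l ≠ k := Finset.ne_of_mem_erase hl
    exact sub_ne_zero.mpr fun h => this (hz h.symm)
  have hdeg : P.natDegree < r := by
    have : P.natDegree = r - 1 := by
      rw [hP, Polynomial.natDegree_prod_of_monic _ _ (fun l _ => monic_X_sub_C (z l))]
      simp [hcard]
    rw [this]
    have : 0 < r := k.pos
    omega
  have heval : ∀ x : ℂ, P.eval x = ∏ l ∈ Finset.univ.erase k, (x - z l) := by
    intro x; simp [hP, Polynomial.eval_prod]
  have key : (V * W) j k = P.eval (z j) / ∏ l ∈ Finset.univ.erase k, (z k - z l) := by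
    rw [Matrix.mul_apply]
    rw [Polynomial.eval_eq_sum_range' hdeg, Finset.sum_div, Finset.sum_range]
    refine Finset.sum_congr rfl fun i _ => ?_
    rw [hV, hW]
    have hi : (i : ℕ) ≤ (Finset.univ.erase k).card := by
      rw [hcard]; omega
    rw [hP, coeff_prod_X_sub_C _ _ _ hi, hcard]
    ring
  rw [key]
  rcases eq_or_ne j k with rfl | hjk
  · rw [heval, div_self hD, Matrix.one_apply_eq]
  · rw [heval, Finset.prod_eq_zero (Finset.mem_erase.mpr ⟨hjk, Finset.mem_univ j⟩) (by ring),
      zero_div, Matrix.one_apply_ne hjk]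
end

section
/- Let z_1,...,z_r be distinct complex numbers with |z_j| ≤ 1 and pairwise separation Δ := min_{j≠k} |z_j - z_k|. Then every entry W_{jk} of the inverse Vandermonde matrix V^{-1} satisfies |W_{jk}| ≤ C(r-1, r-j) / Δ^{r-1}. -/
/-!
The columns of `V⁻¹` are the coefficient vectors of the Lagrange basis polynomials
`ℓ_k = ∏_{l ≠ k} (X - z_l) / ∏_{l ≠ k} (z_k - z_l)`. By Vieta, the coefficient of `X^j` in the
numerator is `±e_{r-1-j}` of the other nodes, a sum of `C(r-1, r-1-j)` monomials of modulus at
most `1`, while the denominator has modulus at least `Δ^(r-1)`.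
-/

open Matrix Finset Polynomial

theorem Multiset.norm_prod_le_one {α : Type*} [SeminormedCommRing α] [NormOneClass α]
    {s : Multiset α} (hs : ∀ x ∈ s, ‖x‖ ≤ 1) : ‖s.prod‖ ≤ 1 :=
  Multiset.prod_induction (‖·‖ ≤ 1) s
    (fun a b ha hb => (norm_mul_le a b).trans (mul_le_one₀ ha (norm_nonneg b) hb))
    norm_one.le hs

theorem Multiset.norm_esymm_le_choose {α : Type*} [SeminormedCommRing α] [NormOneClass α]
    {s : Multiset α} (hs : ∀ x ∈ s, ‖x‖ ≤ 1) (m : ℕ) :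
    ‖s.esymm m‖ ≤ (card s).choose m := by
  calc ‖s.esymm m‖
      ≤ ((s.powersetCard m).map fun t => ‖t.prod‖).sum := by
        simpa [Multiset.esymm, Multiset.map_map] using
          norm_multiset_sum_le ((s.powersetCard m).map Multiset.prod)
    _ ≤ ((s.powersetCard m).map fun _ => (1 : ℝ)).sum :=
        Multiset.sum_map_le_sum_map _ _ fun t ht => norm_prod_le_one fun x hx =>
          hs x (Multiset.mem_of_le (Multiset.mem_powersetCard.1 ht).1 hx)
    _ = (card s).choose m := by simp

theorem Matrix.vandermonde_mul_coeff_apply {R : Type*} [CommRing R] {n : ℕ} (v : Fin n → R)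
    (p : Fin n → R[X]) (hp : ∀ j, (p j).natDegree < n) (i j : Fin n) :
    (vandermonde v * Matrix.of fun (i j : Fin n) => (p j).coeff i) i j = (p j).eval (v i) := by
  rw [eval_eq_sum_range' (hp j), ← Fin.sum_univ_eq_sum_range (fun k => (p j).coeff k * v i ^ k)]
  simp only [mul_apply, vandermonde_apply, of_apply, mul_comm]

theorem Matrix.inv_vandermonde_apply {F : Type*} [Field F] {n : ℕ} {v : Fin n → F}
    (hv : Function.Injective v) (j k : Fin n) :
    (vandermonde v)⁻¹ j k = (Lagrange.basis univ v k).coeff j := by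
  suffices vandermonde v * (Matrix.of fun (j k : Fin n) => (Lagrange.basis univ v k).coeff j) = 1 by
    rw [inv_eq_right_inv this, of_apply]
  have hdeg (k : Fin n) : (Lagrange.basis univ v k).natDegree < n := by
    rw [Lagrange.natDegree_basis hv.injOn (mem_univ k), card_univ, Fintype.card_fin]
    exact Nat.sub_lt k.pos one_pos
  ext i k
  rw [vandermonde_mul_coeff_apply v _ hdeg]
  obtain rfl | hik := eq_or_ne i k
  · rw [Lagrange.eval_basis_self hv.injOn (mem_univ i), one_apply_eq]
  · rw [Lagrange.eval_basis_of_ne hik.symm (mem_univ i), one_apply_ne hik]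

namespace Lagrange

variable {F : Type*} [Field F] {ι : Type*} [DecidableEq ι]

theorem basis_eq_C_mul_prod_X_sub_C (s : Finset ι) (v : ι → F) (i : ι) :
    Lagrange.basis s v i
      = C (∏ l ∈ s.erase i, (v i - v l))⁻¹ * ∏ l ∈ s.erase i, (X - C (v l)) := by
  simp only [Lagrange.basis, basisDivisor, prod_mul_distrib, ← map_prod, prod_inv_distrib]

theorem coeff_basis {s : Finset ι} {i : ι} (hi : i ∈ s) (v : ι → F) {m : ℕ} (hm : m ≤ #s - 1) :
    (Lagrange.basis s v i).coeff m = (∏ l ∈ s.erase i, (v i - v l))⁻¹ *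
      ((-1) ^ (#s - 1 - m) * ((s.erase i).val.map v).esymm (#s - 1 - m)) := by
  have hcard : Multiset.card ((s.erase i).val.map v) = #s - 1 := by
    rw [Multiset.card_map, card_val, card_erase_of_mem hi]
  have hprod : ∏ l ∈ s.erase i, (X - C (v l)) = (((s.erase i).val.map v).map (X - C ·)).prod := by
    rw [Multiset.map_map]
    rfl
  rw [basis_eq_C_mul_prod_X_sub_C, coeff_C_mul, hprod, Multiset.prod_X_sub_C_coeff _ (hcard ▸ hm),
    hcard]

theorem norm_coeff_basis_le {𝕜 : Type*} [NormedField 𝕜] {s : Finset ι} {v : ι → 𝕜} {i : ι}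
    (hi : i ∈ s) (hv : ∀ j ∈ s, ‖v j‖ ≤ 1) {Δ : ℝ} (hΔ : 0 < Δ)
    (hsep : ∀ j ∈ s, j ≠ i → Δ ≤ ‖v i - v j‖) {m : ℕ} (hm : m ≤ #s - 1) :
    ‖(Lagrange.basis s v i).coeff m‖ ≤ (#s - 1).choose (#s - 1 - m) / Δ ^ (#s - 1) := by
  have hcard : #(s.erase i) = #s - 1 := card_erase_of_mem hi
  have hden : ‖(∏ l ∈ s.erase i, (v i - v l))⁻¹‖ ≤ (Δ ^ (#s - 1))⁻¹ := by
    rw [norm_inv, norm_prod, ← hcard, ← prod_const]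
    refine inv_anti₀ (prod_pos fun _ _ => hΔ) (prod_le_prod (fun _ _ => hΔ.le) fun l hl => ?_)
    obtain ⟨hli, hl⟩ := mem_erase.1 hl
    exact hsep l hl hli
  have hnum : ‖((s.erase i).val.map v).esymm (#s - 1 - m)‖ ≤ (#s - 1).choose (#s - 1 - m) := by
    have hnodes : ∀ x ∈ (s.erase i).val.map v, ‖x‖ ≤ 1 := fun x hx => by
      obtain ⟨j, hj, rfl⟩ := Multiset.mem_map.1 hx
      exact hv j (mem_of_mem_erase hj)
    have := Multiset.norm_esymm_le_choose hnodes (#s - 1 - m)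
    rwa [Multiset.card_map, card_val, hcard] at this
  rw [coeff_basis hi v hm, norm_mul, norm_mul, norm_pow, norm_neg, norm_one, one_pow, one_mul,
    div_eq_inv_mul]
  exact mul_le_mul hden hnum (norm_nonneg _) (by positivity)

end Lagrange

theorem vandermonde_inverse_entry_bound (r : ℕ) (z : Fin r → ℂ)
    (hzle : ∀ j, ‖z j‖ ≤ 1)
    (Δ : ℝ) (hΔpos : 0 < Δ)
    (hΔ : ∀ j k, j ≠ k → Δ ≤ ‖z j - z k‖)
    (V : Matrix (Fin r) (Fin r) ℂ)
    (hV : ∀ j k, V j k = z j ^ (k.1)) :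
    ∀ j k : Fin r,
      ‖V⁻¹ j k‖ ≤ ((r - 1).choose (r - 1 - j.1) : ℝ) / Δ ^ (r - 1) := by
  intro j k
  have hinj : Function.Injective z := fun a b hab => by
    by_contra hne
    have := hΔ a b hne
    rw [hab, sub_self, norm_zero] at this
    linarith
  obtain rfl : V = vandermonde z := Matrix.ext hV
  have hbound := Lagrange.norm_coeff_basis_le (mem_univ k) (fun l _ => hzle l) hΔpos
    (fun l _ hlk => hΔ k l hlk.symm) (m := j) (by rw [card_univ, Fintype.card_fin]; omega)
  simpa only [inv_vandermonde_apply hinj, card_univ, Fintype.card_fin] using hbound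
end

section
/- Let A, E be n×n complex matrices with A diagonalizable as A = X Λ X^{-1}, Λ diagonal with diagonal entries (eigenvalues) λ_1,...,λ_n. Then for every eigenvalue μ of A + E there exists some λ_i with |μ - λ_i| ≤ κ(X)·‖E‖, where κ(X) = ‖X‖·‖X^{-1}‖ (Bauer–Fike theorem). -/
/-!
In the eigenbasis coordinates `w = X⁻¹ v` the eigen-equation of `A + E` reads
`(μ - Λ) w = X⁻¹ E X w`. The left side has Euclidean norm at least `minᵢ |μ - λᵢ| · ‖w‖`,
the right side at most `‖X⁻¹‖ ‖E‖ ‖X‖ · ‖w‖`, and `w ≠ 0`.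
-/

open Matrix

/-- The spectral (operator) norm of a square complex matrix. -/
noncomputable def opNorm {n : ℕ} (M : Matrix (Fin n) (Fin n) ℂ) : ℝ :=
  ‖Matrix.toEuclideanCLM (𝕜 := ℂ) M‖

theorem Matrix.smul_one_sub_mulVec_eq_of_similar {R ι : Type*} [CommRing R] [Fintype ι]
    [DecidableEq ι] {A D E X : Matrix ι ι R} (hX : IsUnit X) (hA : A = X * D * X⁻¹) {μ : R}
    {w : ι → R} (hμ : (A + E) *ᵥ (X *ᵥ w) = μ • (X *ᵥ w)) :
    (μ • 1 - D) *ᵥ w = (X⁻¹ * E * X) *ᵥ w := by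
  have hXX : X⁻¹ * X = 1 := nonsing_inv_mul X ((isUnit_iff_isUnit_det X).mp hX)
  have hconj : X⁻¹ * (A + E) * X = D + X⁻¹ * E * X := by
    rw [hA, mul_add, add_mul]
    simp only [← mul_assoc, hXX, one_mul]
    rw [mul_assoc _ X⁻¹ X, hXX, mul_one]
  have hw : (D + X⁻¹ * E * X) *ᵥ w = μ • w := by
    rw [← hconj, ← mulVec_mulVec, ← mulVec_mulVec, hμ, mulVec_smul, mulVec_mulVec, hXX,
      one_mulVec]
  rw [sub_mulVec, smul_mulVec, one_mulVec, ← hw, add_mulVec, add_sub_cancel_left]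

theorem EuclideanSpace.norm_le_norm_of_forall {𝕜 ι : Type*} [RCLike 𝕜] [Fintype ι]
    {x y : EuclideanSpace 𝕜 ι} (h : ∀ i, ‖x i‖ ≤ ‖y i‖) : ‖x‖ ≤ ‖y‖ := by
  rw [EuclideanSpace.norm_eq, EuclideanSpace.norm_eq]
  gcongr with i
  exact h i

theorem Matrix.mul_norm_le_norm_toEuclideanCLM_diagonal {𝕜 ι : Type*} [RCLike 𝕜] [Fintype ι]
    [DecidableEq ι] {d : ι → 𝕜} {c : ℝ} (hc : ∀ i, c ≤ ‖d i‖) (x : EuclideanSpace 𝕜 ι) :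
    c * ‖x‖ ≤ ‖toEuclideanCLM (𝕜 := 𝕜) (diagonal d) x‖ := by
  rcases le_or_gt c 0 with hc0 | hc0
  · exact (mul_nonpos_of_nonpos_of_nonneg hc0 (norm_nonneg x)).trans (norm_nonneg _)
  calc c * ‖x‖ = ‖(c : 𝕜) • x‖ := by rw [norm_smul, RCLike.norm_ofReal, abs_of_pos hc0]
    _ ≤ ‖toEuclideanCLM (𝕜 := 𝕜) (diagonal d) x‖ := by
      refine EuclideanSpace.norm_le_norm_of_forall fun i => ?_
      simp only [PiLp.smul_apply, ofLp_toEuclideanCLM, mulVec_diagonal, norm_smul, norm_mul,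
        RCLike.norm_ofReal, abs_of_pos hc0]
      exact mul_le_mul_of_nonneg_right (hc i) (norm_nonneg _)

theorem Matrix.exists_norm_le_norm_toEuclideanCLM_of_diagonal_mulVec_eq {𝕜 ι : Type*} [RCLike 𝕜]
    [Fintype ι] [DecidableEq ι] {d : ι → 𝕜} {M : Matrix ι ι 𝕜} {w : ι → 𝕜} (hw : w ≠ 0)
    (h : diagonal d *ᵥ w = M *ᵥ w) : ∃ i, ‖d i‖ ≤ ‖toEuclideanCLM (𝕜 := 𝕜) M‖ := by
  have : Nonempty ι := by
    obtain ⟨i, -⟩ := Function.ne_iff.mp hw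
    exact ⟨i⟩
  obtain ⟨i, hi⟩ := Finite.exists_min fun i => ‖d i‖
  refine ⟨i, le_of_mul_le_mul_right ?_ (norm_pos_iff.mpr ((WithLp.toLp_eq_zero 2).not.mpr hw))⟩
  calc ‖d i‖ * ‖WithLp.toLp 2 w‖
      ≤ ‖toEuclideanCLM (𝕜 := 𝕜) (diagonal d) (WithLp.toLp 2 w)‖ :=
        mul_norm_le_norm_toEuclideanCLM_diagonal hi _
    _ = ‖toEuclideanCLM (𝕜 := 𝕜) M (WithLp.toLp 2 w)‖ := by rw [toEuclideanCLM_toLp, h]; rfl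
    _ ≤ ‖toEuclideanCLM (𝕜 := 𝕜) M‖ * ‖WithLp.toLp 2 w‖ :=
        (toEuclideanCLM (𝕜 := 𝕜) M).le_opNorm _

theorem opNorm_mul_le {n : ℕ} (M N : Matrix (Fin n) (Fin n) ℂ) :
    opNorm (M * N) ≤ opNorm M * opNorm N := by
  simp only [opNorm, map_mul]
  exact norm_mul_le _ _

/-- **Bauer–Fike theorem.** -/
theorem bauer_fike (n : ℕ) (A E X : Matrix (Fin n) (Fin n) ℂ)
    (l : Fin n → ℂ) (hX : IsUnit X)
    (hA : A = X * Matrix.diagonal l * X⁻¹)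
    (μ : ℂ) (v : Fin n → ℂ) (hv : v ≠ 0)
    (hμ : (A + E).mulVec v = μ • v) :
    ∃ i, ‖μ - l i‖ ≤ opNorm X * opNorm X⁻¹ * opNorm E := by
  set w := X⁻¹ *ᵥ v
  have hXw : X *ᵥ w = v := by
    rw [mulVec_mulVec, mul_nonsing_inv X ((isUnit_iff_isUnit_det X).mp hX), one_mulVec]
  have hw : w ≠ 0 := by
    rintro h0
    rw [h0, mulVec_zero] at hXw
    exact hv hXw.symm
  have hdiag : diagonal (fun i => μ - l i) *ᵥ w = (X⁻¹ * E * X) *ᵥ w := by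
    rw [← diagonal_sub, ← smul_one_eq_diagonal]
    exact smul_one_sub_mulVec_eq_of_similar hX hA (hXw ▸ hμ)
  obtain ⟨i, hi⟩ := exists_norm_le_norm_toEuclideanCLM_of_diagonal_mulVec_eq hw hdiag
  refine ⟨i, hi.trans ?_⟩
  calc opNorm (X⁻¹ * E * X) ≤ opNorm X⁻¹ * opNorm E * opNorm X :=
        (opNorm_mul_le _ _).trans (mul_le_mul_of_nonneg_right (opNorm_mul_le _ _) (norm_nonneg _))
    _ = opNorm X * opNorm X⁻¹ * opNorm E := by ring
end
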